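/- Let (ℱ, 𝒮), B, G^D, and S′ be as in the D-paths auxiliary construction. Then the minimum size of an (S′, B)-separator in G^D equals min over B′ ⊆ B of (|B \ B′| + Σ_{i=1}^{ℓ} x_i(B′)), where x_i(B′) is the minimum size of an (S_i, B′)-separator in G_i. -/

import Mathlib

/-- A (directed) path given as a nonempty list of pairwise-distinct vertices
with consecutive pairs being edges of the digraph `G`. -/
def IsPathList {V : Type*} (G : V → V → Prop) (p : List V) : Prop :=
  p ≠ [] ∧ p.Nodup ∧ p.Chain' G

/-- The first vertex of the list `p` belongs to `A`. -/
def FirstIn {V : Type*} (p : List V) (A : Set V) : Prop := ∃ a ∈ A, p.head? = some a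

/-- The last vertex of the list `p` belongs to `A`. -/
def LastIn {V : Type*} (p : List V) (A : Set V) : Prop := ∃ a ∈ A, p.getLast? = some a

/-- `X` is an `(A,B)`-separator in `G`: every path of `G` starting in `A` and
ending in `B` meets `X`. -/
def IsSeparator {V : Type*} (G : V → V → Prop) (A B X : Set V) : Prop :=
  ∀ p : List V, IsPathList G p → FirstIn p A → LastIn p B → ∃ v ∈ p, v ∈ X

/-- Two lists of vertices share no vertex. -/
def ListsDisjoint {V : Type*} (p q : List V) : Prop := ∀ v, v ∈ p → v ∉ q

/-- An `(ℱ,𝒮)`-respecting system of paths, encoded as a finite set of pairs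
`(i, p)` where `p` is a path of `G i` starting in `S i`, and paths assigned to
the same index (i.e. in the same part of the defining partition) are pairwise
vertex-disjoint. -/
def RespectingSys {V : Type*} {ℓ : ℕ} (G : Fin ℓ → V → V → Prop) (S : Fin ℓ → Set V)
    (P : Finset (Fin ℓ × List V)) : Prop :=
  (∀ q ∈ P, IsPathList (G q.1) q.2 ∧ FirstIn q.2 (S q.1)) ∧
  (∀ q ∈ P, ∀ q' ∈ P, q ≠ q' → q.1 = q'.1 → ListsDisjoint q.2 q'.2)

/-- A set of D-paths w.r.t. `(ℱ,𝒮)` and `B` : a respecting system whose paths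
have pairwise distinct last vertices, all lying in `B`. -/
def DPathSys {V : Type*} {ℓ : ℕ} (G : Fin ℓ → V → V → Prop) (S : Fin ℓ → Set V)
    (B : Set V) (P : Finset (Fin ℓ × List V)) : Prop :=
  RespectingSys G S P ∧ (∀ q ∈ P, LastIn q.2 B) ∧
  (∀ q ∈ P, ∀ q' ∈ P, q ≠ q' → q.2.getLast? ≠ q'.2.getLast?)

/-- The auxiliary digraph `G^D`: disjoint copies of the `G i` (on `Fin ℓ × V`),
together with the vertices of `B` (the `Sum.inr` part), with an edge from each
copy of `v` to the vertex `v ∈ B`. -/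
def AuxD {V : Type*} {ℓ : ℕ} (G : Fin ℓ → V → V → Prop) (B : Set V) :
    (Fin ℓ × V) ⊕ V → (Fin ℓ × V) ⊕ V → Prop :=
  fun x y => match x, y with
  | Sum.inl (i, u), Sum.inl (j, v) => i = j ∧ G i u v
  | Sum.inl (_, u), Sum.inr v => u = v ∧ v ∈ B
  | _, _ => False

/-- The copies of the source sets inside the respective copies of the `G i`. -/
def AuxS {V : Type*} {ℓ : ℕ} (S : Fin ℓ → Set V) : Set ((Fin ℓ × V) ⊕ V) :=
  {w | ∃ i, ∃ s ∈ S i, w = Sum.inl (i, s)}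


/-!
A set `X` of vertices of `G^D` consists of its trace in `B` and its traces in the copies of
the `G i`; let `B'` be the set of vertices of `B` that `X` misses. A path of `G^D` from `S'`
to `B` runs inside a single copy of some `G i` and then steps into its endpoint `b ∈ B`. So
`X` is an `(S', B)`-separator exactly when each trace in a copy of `G i` is an
`(S i, B')`-separator: paths ending in `B \ B'` are blocked at their last vertex, and the others
are copies of `(S i, B')`-paths of `G i`. Counting vertices gives both inequalities.
-/

lemma isSeparator_univ {V : Type*} (G : V → V → Prop) (A C : Set V) :
    IsSeparator G A C Set.univ := by
  rintro (_ | ⟨a, _⟩) hp _ _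
  · exact absurd rfl hp.1
  · exact ⟨a, List.mem_cons_self, trivial⟩

lemma Nat.sInf_le_sInf_of_forall_exists_le {s t : Set ℕ} (ht : t.Nonempty)
    (h : ∀ n ∈ t, ∃ m ∈ s, m ≤ n) : sInf s ≤ sInf t := by
  obtain ⟨m, hm, hle⟩ := h _ (Nat.sInf_mem ht)
  exact (Nat.sInf_le hm).trans hle

lemma ncard_setOf_snd_mem {ι V : Type*} [Fintype ι] [Finite V] (Y : ι → Set V) :
    {p : ι × V | p.2 ∈ Y p.1}.ncard = ∑ i, (Y i).ncard := by
  rw [← Nat.card_coe_set_eq]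
  exact (Nat.card_congr (Equiv.subtypeProdEquivSigmaSubtype fun i v => v ∈ Y i)).trans
    Nat.card_sigma

lemma ncard_image_inl_union_image_inr {α β : Type*} [Finite α] [Finite β]
    (s : Set α) (t : Set β) :
    (Sum.inl '' s ∪ Sum.inr '' t : Set (α ⊕ β)).ncard = s.ncard + t.ncard := by
  rw [Set.ncard_union_eq Set.disjoint_image_inl_image_inr,
    Set.ncard_image_of_injective _ Sum.inl_injective,
    Set.ncard_image_of_injective _ Sum.inr_injective]

section AuxD

variable {V : Type*} {ℓ : ℕ} {G : Fin ℓ → V → V → Prop} {B : Set V}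

def liftPath (i : Fin ℓ) (q : List V) (b : V) : List ((Fin ℓ × V) ⊕ V) :=
  q.map (fun v => Sum.inl (i, v)) ++ [Sum.inr b]

def liftSeparator (X : Fin ℓ → Set V) (C : Set V) : Set ((Fin ℓ × V) ⊕ V) :=
  Sum.inl '' {p | p.2 ∈ X p.1} ∪ Sum.inr '' C

lemma ncard_liftSeparator [Finite V] (X : Fin ℓ → Set V) (C : Set V) :
    (liftSeparator X C).ncard = C.ncard + ∑ i, (X i).ncard := by
  rw [liftSeparator, ncard_image_inl_union_image_inr, ncard_setOf_snd_mem, add_comm]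

lemma isPathList_liftPath {i : Fin ℓ} {q : List V} {b : V} (hq : IsPathList (G i) q)
    (hlast : q.getLast? = some b) (hb : b ∈ B) :
    IsPathList (AuxD G B) (liftPath i q b) := by
  obtain ⟨-, hnd, hch⟩ := hq
  refine ⟨by simp [liftPath], ?_, ?_⟩
  · refine List.nodup_append.mpr ⟨hnd.map fun a a' h => by simpa using h,
      List.nodup_singleton _, ?_⟩
    simp
  · refine List.isChain_append.mpr
      ⟨List.isChain_map_of_isChain _ (fun _ _ h => ⟨rfl, h⟩) hch, List.isChain_singleton _, ?_⟩
    simp only [List.getLast?_map, hlast, Option.map_some, List.head?_cons, Option.mem_def,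
      Option.some.injEq]
    rintro _ rfl _ rfl
    exact ⟨rfl, hb⟩

lemma exists_eq_liftPath_of_isChain {i : Fin ℓ} {b : V} :
    ∀ {s : V} {t : List ((Fin ℓ × V) ⊕ V)}, (Sum.inl (i, s) :: t).IsChain (AuxD G B) →
      (Sum.inl (i, s) :: t).getLast? = some (Sum.inr b) →
      ∃ q, Sum.inl (i, s) :: t = liftPath i q b ∧ q.head? = some s ∧
        q.getLast? = some b ∧ q.IsChain (G i) ∧ b ∈ B
  | _, [], _, hlast => by simp at hlast
  | s, Sum.inl (j, v) :: t, hch, hlast => by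
    obtain ⟨⟨rfl, hG⟩, hch⟩ := List.isChain_cons_cons.mp hch
    obtain ⟨_ | ⟨a, q⟩, hp, hhead, hqlast, hqch, hb⟩ :=
      exists_eq_liftPath_of_isChain hch (by rwa [List.getLast?_cons_cons] at hlast)
    · simp at hhead
    obtain rfl : a = v := by simpa using hhead
    refine ⟨s :: a :: q, by simp [liftPath, hp], rfl, by rwa [List.getLast?_cons_cons],
      List.isChain_cons_cons.mpr ⟨hG, hqch⟩, hb⟩
  | s, Sum.inr c :: t, hch, hlast => by
    obtain ⟨⟨rfl, hc⟩, hch⟩ := List.isChain_cons_cons.mp hch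
    obtain _ | ⟨_ | _, t⟩ := t
    · obtain rfl : s = b := by simpa using hlast
      exact ⟨[s], rfl, rfl, rfl, List.isChain_singleton _, hc⟩
    all_goals exact (List.isChain_cons_cons.mp hch).1.elim

lemma isSeparator_liftSeparator {S : Fin ℓ → Set V} {B' : Set V} {X : Fin ℓ → Set V}
    (hX : ∀ i, IsSeparator (G i) (S i) B' (X i)) :
    IsSeparator (AuxD G B) (AuxS S) (Sum.inr '' B) (liftSeparator X (B \ B')) := by
  rintro (_ | ⟨x, t⟩) hp ⟨_, ⟨i, s, hs, rfl⟩, hhead⟩ ⟨_, ⟨b, hbB, rfl⟩, hlast⟩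
  · simp at hhead
  obtain rfl : x = Sum.inl (i, s) := by simpa using hhead
  obtain ⟨q, hpq, hqs, hqb, hqch, -⟩ := exists_eq_liftPath_of_isChain hp.2.2 hlast
  rw [hpq]
  by_cases hb : b ∈ B'
  · have hq : IsPathList (G i) q :=
      ⟨by rintro rfl; simp at hqs, (List.nodup_append.mp (hpq ▸ hp.2.1)).1.of_map _, hqch⟩
    obtain ⟨u, hu, huX⟩ := hX i q hq ⟨s, hs, hqs⟩ ⟨b, hb, hqb⟩
    exact ⟨_, by simpa [liftPath] using hu, Or.inl ⟨(i, u), huX, rfl⟩⟩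
  · exact ⟨Sum.inr b, by simp [liftPath], Or.inr ⟨b, ⟨hbB, hb⟩, rfl⟩⟩

lemma isSeparator_of_isSeparator_auxD {S : Fin ℓ → Set V} {X : Set ((Fin ℓ × V) ⊕ V)}
    (hX : IsSeparator (AuxD G B) (AuxS S) (Sum.inr '' B) X) (i : Fin ℓ) :
    IsSeparator (G i) (S i) {v ∈ B | Sum.inr v ∉ X} {v | Sum.inl (i, v) ∈ X} := by
  rintro q hq ⟨s, hs, hqs⟩ ⟨b, ⟨hbB, hbX⟩, hqb⟩
  obtain ⟨v, hv, hvX⟩ := hX _ (isPathList_liftPath hq hqb hbB)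
    ⟨_, ⟨i, s, hs, rfl⟩, by simp [liftPath, hqs]⟩ ⟨_, ⟨b, hbB, rfl⟩, by simp [liftPath]⟩
  simp only [liftPath, List.mem_append, List.mem_map, List.mem_singleton] at hv
  rcases hv with ⟨u, hu, rfl⟩ | rfl
  · exact ⟨u, hu, hvX⟩
  · exact absurd hvX hbX

lemma liftSeparator_subset (X : Set ((Fin ℓ × V) ⊕ V)) :
    liftSeparator (fun i => {v | Sum.inl (i, v) ∈ X}) (B \ {v ∈ B | Sum.inr v ∉ X}) ⊆ X := by
  rintro _ (⟨⟨i, u⟩, hu, rfl⟩ | ⟨v, hv, rfl⟩)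
  · exact hu
  · by_contra h
    exact hv.2 ⟨hv.1, h⟩

end AuxD

/-- The minimum size of an `(S', B)`-separator in the auxiliary digraph `G^D`
equals `min over B' ⊆ B of (|B \ B'| + Σ_i x_i(B'))`, where `x_i(B')` is the
minimum size of an `(S_i, B')`-separator in `G_i`. -/
theorem aux_min_separator {V : Type*} [Fintype V] {ℓ : ℕ}
    (G : Fin ℓ → V → V → Prop) (S : Fin ℓ → Set V) (B : Set V) :
    sInf {n : ℕ | ∃ X : Set ((Fin ℓ × V) ⊕ V),
        IsSeparator (AuxD G B) (AuxS S) (Sum.inr '' B) X ∧ X.ncard = n} =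
    sInf {n : ℕ | ∃ B' ⊆ B, ∃ X : Fin ℓ → Set V,
      (∀ i, IsSeparator (G i) (S i) B' (X i)) ∧
      n = (B \ B').ncard + ∑ i : Fin ℓ, (X i).ncard} := by
  apply le_antisymm
  · refine Nat.sInf_le_sInf_of_forall_exists_le
      ⟨_, B, subset_rfl, fun _ => Set.univ, fun _ => isSeparator_univ _ _ _, rfl⟩ ?_
    rintro _ ⟨B', -, X, hX, rfl⟩
    exact ⟨_, ⟨_, isSeparator_liftSeparator hX, rfl⟩, (ncard_liftSeparator X _).le⟩
  · refine Nat.sInf_le_sInf_of_forall_exists_le ⟨_, Set.univ, isSeparator_univ _ _ _, rfl⟩ ?_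
    rintro _ ⟨X, hX, rfl⟩
    refine ⟨_, ⟨_, fun v hv => hv.1, _, isSeparator_of_isSeparator_auxD hX, rfl⟩, ?_⟩
    exact (ncard_liftSeparator _ _).symm.trans_le <| Set.ncard_le_ncard (liftSeparator_subset X)
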